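/- Suppose a¹, …, a^{n−1} : ℝ → ℝ are differentiable at t₀ with a^{i'}(t₀) = 0, and suppose that for all t near t₀ and all i' = 1, …, n−1 one has g(t)(w(t), e_{i'}) = 0, where w(t) = e_n + ∑_{j'=1}^{n−1} a^{j'}(t) e_{j'}. Define the unit normal ν(t) = w(t) / √(g(t)(w(t), w(t))). Then ν is differentiable at t₀ with ν(t₀) = e_n and ν'(t₀) = 2 ∑_{i'=1}^{n−1} S(e_{i'}, e_n) e_{i'} + S(e_n, e_n) e_n. (This is formula (2.12) of the paper: ∂ₜν = 2 ∑_{i'} Ric_{i'ν} ∂_{i'} + Ric_{νν} ∂_ν for the evolution of the outward unit normal under the Ricci flow.) -/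

import Mathlib

/-!
Since `w(t₀) = e_n`, differentiating `g(t)(w(t), e_{i'}) = 0` at `t₀` gives
`-2 S(e_n, e_{i'}) + (a^{i'})'(t₀) = 0`. By the same orthogonality `g(t)(w, w) = g(t)(w, e_n)`,
whose derivative at `t₀` is `-2 S(e_n, e_n)`; as `|w(t₀)| = 1`, the normalising factor `|w|⁻¹`
has derivative `S(e_n, e_n)`, and `ν' = w' + S(e_n, e_n) e_n`.
-/

open Finset

namespace LinearMap.BilinForm

section Coefficients

variable {R M ι : Type*} [CommRing R] [AddCommGroup M] [Module R M] [Fintype ι]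
  (B : LinearMap.BilinForm R M) {f : ι → M}

theorem sum_smul_apply_of_orthonormal [DecidableEq ι]
    (hf : ∀ i j, B (f i) (f j) = if i = j then 1 else 0) (b : ι → R) (i : ι) :
    B (∑ j, b j • f j) (f i) = b i := by
  simp [map_sum, hf]

theorem sum_smul_apply_eq_zero {u : M} (hf : ∀ j, B (f j) u = 0) (b : ι → R) :
    B (∑ j, b j • f j) u = 0 := by
  simp [map_sum, hf]

end Coefficients

theorem hasDerivAt_add_sum_smul_apply {E ι : Type*} [AddCommGroup E] [Module ℝ E] [Fintype ι]
    {g : ℝ → LinearMap.BilinForm ℝ E} {g' : LinearMap.BilinForm ℝ E} {t₀ : ℝ}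
    (hg : ∀ v w, HasDerivAt (fun t => g t v w) (g' v w) t₀)
    {a : ι → ℝ → ℝ} {a' : ι → ℝ} (ha : ∀ j, HasDerivAt (a j) (a' j) t₀) (u : E) (f : ι → E)
    (v : E) :
    HasDerivAt (fun t => g t (u + ∑ j, a j t • f j) v)
      (g' (u + ∑ j, a j t₀ • f j) v + g t₀ (∑ j, a' j • f j) v) t₀ := by
  have hexpand : ∀ (B : LinearMap.BilinForm ℝ E) (b : ι → ℝ),
      B (u + ∑ j, b j • f j) v = B u v + ∑ j, b j * B (f j) v := fun B b => by
    simp [map_sum]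
  simp only [hexpand, map_sum, map_smul, LinearMap.sum_apply, LinearMap.smul_apply, smul_eq_mul,
    add_assoc, ← sum_add_distrib]
  exact (hg u v).add (HasDerivAt.fun_sum fun j _ => (ha j).mul (hg (f j) v)) |>.congr_deriv
    (by simp only [sum_add_distrib]; ring)

end LinearMap.BilinForm

theorem HasDerivAt.inv_sqrt_smul {E : Type*} [NormedAddCommGroup E] [NormedSpace ℝ E]
    {G : ℝ → ℝ} {G' : ℝ} {w : ℝ → E} {w' : E} {t₀ : ℝ}
    (hG : HasDerivAt G G' t₀) (hG₁ : G t₀ = 1) (hw : HasDerivAt w w' t₀) :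
    HasDerivAt (fun t => (√(G t))⁻¹ • w t) (w' - (G' / 2) • w t₀) t₀ := by
  have hinv := (hG.sqrt (by simp [hG₁])).inv (by simp [hG₁])
  refine (hinv.smul hw).congr_deriv ?_
  simp [hG₁, sub_eq_add_neg]

/-- Formula (2.12): evolution of the outward unit normal under the Ricci flow
`∂ₜ g = −2S`.  With `w(t) = e_n + ∑_{j'} a^{j'}(t) e_{j'}` kept `g(t)`-orthogonal to
the tangent vectors and `ν(t) = w(t)/√(g(t)(w(t),w(t)))`, one has `ν(t₀) = e_n` and
`ν'(t₀) = 2 ∑_{i'} S(e_{i'}, e_n) e_{i'} + S(e_n, e_n) e_n`. -/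
theorem deriv_outward_unit_normal
    (n : ℕ) (hn : 2 ≤ n) (t₀ : ℝ)
    (g : ℝ → LinearMap.BilinForm ℝ (Fin n → ℝ))
    (S : LinearMap.BilinForm ℝ (Fin n → ℝ))
    (hSsymm : ∀ v w, S v w = S w v)
    (hgderiv : ∀ v w, HasDerivAt (fun t => g t v w) (-2 * S v w) t₀)
    (e : Fin n → (Fin n → ℝ))
    (honb : ∀ i j, g t₀ (e i) (e j) = if i = j then 1 else 0)
    (a : Fin (n - 1) → ℝ → ℝ)
    (hadiff : ∀ i, DifferentiableAt ℝ (a i) t₀)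
    (ha0 : ∀ i, a i t₀ = 0)
    (w : ℝ → (Fin n → ℝ))
    (hw : ∀ t, w t = e ⟨n - 1, by omega⟩
            + ∑ j : Fin (n - 1), a j t • e (Fin.castLE (Nat.sub_le n 1) j))
    (horth : ∀ᶠ t in nhds t₀, ∀ i : Fin (n - 1),
      g t (w t) (e (Fin.castLE (Nat.sub_le n 1) i)) = 0)
    (ν : ℝ → (Fin n → ℝ))
    (hν : ∀ t, ν t = (Real.sqrt (g t (w t) (w t)))⁻¹ • w t) :
    ν t₀ = e ⟨n - 1, by omega⟩ ∧
      HasDerivAt ν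
        ((2 : ℝ) • ∑ i : Fin (n - 1),
            S (e (Fin.castLE (Nat.sub_le n 1) i)) (e ⟨n - 1, by omega⟩)
              • e (Fin.castLE (Nat.sub_le n 1) i)
          + S (e ⟨n - 1, by omega⟩) (e ⟨n - 1, by omega⟩) • e ⟨n - 1, by omega⟩) t₀ := by
  set c : Fin (n - 1) → Fin n := Fin.castLE (Nat.sub_le n 1)
  set eN := e ⟨n - 1, by omega⟩
  have honb_tangent : ∀ i j, g t₀ (e (c i)) (e (c j)) = if i = j then 1 else 0 := fun i j => by
    rw [honb]
    exact if_congr (Fin.castLE_injective _).eq_iff rfl rfl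
  have honb_normal : ∀ j, g t₀ (e (c j)) eN = 0 := fun j => by
    simp [eN, honb, Fin.ext_iff, c]
    omega
  set a' := fun j => deriv (a j) t₀
  have ha : ∀ j, HasDerivAt (a j) (a' j) t₀ := fun j => (hadiff j).hasDerivAt
  have hgS : ∀ v v', HasDerivAt (fun t => g t v v') ((-2 • S) v v') t₀ := by simpa using hgderiv
  have hw₀ : w t₀ = eN := by simp [hw, ha0]
  have hw' : HasDerivAt w (∑ j, a' j • e (c j)) t₀ := by
    rw [funext hw]
    simpa using (HasDerivAt.fun_sum fun j _ => (ha j).smul_const (e (c j))).const_add eN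
  have hgw : ∀ v, HasDerivAt (fun t => g t (w t) v)
      (-2 * S eN v + g t₀ (∑ j, a' j • e (c j)) v) t₀ := fun v => by
    rw [funext hw]
    simpa [ha0] using LinearMap.BilinForm.hasDerivAt_add_sum_smul_apply hgS ha eN (e ∘ c) v
  have hcoeff : ∀ i, a' i = 2 * S eN (e (c i)) := fun i => by
    have h0 : HasDerivAt (fun t => g t (w t) (e (c i))) 0 t₀ :=
      (hasDerivAt_const t₀ 0).congr_of_eventuallyEq (horth.mono fun t ht => ht i)
    have hzero := (hgw (e (c i))).unique h0
    rw [LinearMap.BilinForm.sum_smul_apply_of_orthonormal _ honb_tangent] at hzero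
    linarith
  have hnormsq : HasDerivAt (fun t => g t (w t) (w t)) (-2 * S eN eN) t₀ := by
    have hgwN := hgw eN
    rw [LinearMap.BilinForm.sum_smul_apply_eq_zero _ honb_normal, add_zero] at hgwN
    refine hgwN.congr_of_eventuallyEq ?_
    filter_upwards [horth] with t ht
    rw [congrArg (g t (w t)) (hw t)]
    simp [map_sum, ht]
  refine ⟨by simp [hν, hw₀, eN, honb], ?_⟩
  rw [funext hν]
  refine (hnormsq.inv_sqrt_smul (by simp [hw₀, eN, honb]) hw').congr_deriv ?_
  simp only [hw₀, hcoeff, smul_sum, smul_smul, hSsymm, sub_eq_add_neg, ← neg_smul]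
  congr 2
  ring
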